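/- Let σ > 0 and let X_2, X_3, X_4 be i.i.d. Rayleigh random variables with density f(t) = (2t/σ) exp(−t^2/σ) for t ≥ 0. Then for all x > 0, the factor density of the maximum of two products, 2 f(x) P(X_3 · X_4 < x · X_2), equals (4 x^3 / σ^2) E_1(x^2/σ), where E_1(x) = ∫_x^∞ e^{−t}/t dt is the exponential integral. In particular, x ↦ (4x^3/σ^2) E_1(x^2/σ) is a probability density on (0, ∞). -/

import Mathlib

open MeasureTheory ProbabilityTheory

/-- The exponential integral `E₁(x) = ∫_x^∞ e^{-t}/t dt`. -/
noncomputable def expIntE1 (x : ℝ) : ℝ :=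
  ∫ t in Set.Ioi x, Real.exp (-t) / t

/-!
If `X` is Rayleigh with parameter `σ`, then `X² / σ` is a standard exponential variable; in
particular `P(X > c) = e^{-c²/σ}` and `E[e^{-λ X²/σ}] = 1/(1 + λ)`. Conditioning on `X₃ = s`,
`X₄ = t` gives `P(X₃X₄ < xX₂) = E[exp(-(X₃X₄/x)²/σ)]`; integrating out `X₄` leaves
`E[x²/(x² + X₃²)] = ∫₀^∞ e^{-v} x²/(x² + σv) dv = a eᵃ E₁(a)` with `a = x²/σ`, and the factor
`eᵃ` cancels against `f(x)`. The total mass follows from the same substitution `v = x²/σ` and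
Tonelli: `∫₀^∞ 2v E₁(v) dv = ∫₀^∞ t e^{-t} dt = Γ(2) = 1`.
-/

open Set Real
open scoped ENNReal

lemma integrableOn_exp_neg_div_Ioi {a : ℝ} (ha : 0 < a) :
    IntegrableOn (fun t => exp (-t) / t) (Ioi a) := by
  refine ((integrableOn_exp_neg_Ioi a).const_mul a⁻¹).mono'
    (by fun_prop : Measurable fun t : ℝ => exp (-t) / t).aestronglyMeasurable ?_
  filter_upwards [ae_restrict_mem measurableSet_Ioi] with t (ht : a < t)
  rw [norm_of_nonneg (by have := ha.trans ht; positivity), div_eq_inv_mul]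
  gcongr

lemma expIntE1_nonneg {a : ℝ} (ha : 0 ≤ a) : 0 ≤ expIntE1 a :=
  setIntegral_nonneg measurableSet_Ioi fun t (ht : a < t) => by
    have := ha.trans_lt ht; positivity

lemma ofReal_expIntE1 {a : ℝ} (ha : 0 < a) :
    ENNReal.ofReal (expIntE1 a) = ∫⁻ t in Ioi a, ENNReal.ofReal (exp (-t) / t) :=
  ofReal_integral_eq_lintegral_ofReal (integrableOn_exp_neg_div_Ioi ha) <| by
    filter_upwards [ae_restrict_mem measurableSet_Ioi] with t (ht : a < t)
    have := ha.trans ht; positivity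

@[fun_prop]
lemma measurable_expIntE1 : Measurable expIntE1 := by
  have h : expIntE1 = fun a => ∫ t, (Ioi a).indicator (fun t => exp (-t) / t) t := by
    ext a; exact (integral_indicator measurableSet_Ioi).symm
  rw [h]
  refine (StronglyMeasurable.integral_prod_right' (f := fun p : ℝ × ℝ =>
    (Ioi p.1).indicator (fun t => exp (-t) / t) p.2) ?_).measurable
  exact (Measurable.indicator (by fun_prop) (measurableSet_lt measurable_fst measurable_snd)
    ).stronglyMeasurable

lemma lintegral_exp_neg_div_add {a : ℝ} (ha : 0 < a) :
    ∫⁻ v in Ioi 0, ENNReal.ofReal (exp (-v) / (v + a))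
      = ENNReal.ofReal (exp a * expIntE1 a) := by
  have hshift := lintegral_image_eq_lintegral_abs_deriv_mul (measurableSet_Ioi (a := 0))
    (fun v _ => ((hasDerivAt_id' v).add_const a).hasDerivWithinAt)
    (add_left_injective a).injOn (fun t => ENNReal.ofReal (exp (-t) / t))
  rw [image_add_const_Ioi, zero_add] at hshift
  rw [ENNReal.ofReal_mul (exp_pos a).le, ofReal_expIntE1 ha, hshift,
    ← lintegral_const_mul' _ _ ENNReal.ofReal_ne_top]
  refine setLIntegral_congr_fun measurableSet_Ioi fun v (hv : 0 < v) => ?_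
  rw [abs_one, ENNReal.ofReal_one, one_mul, ← ENNReal.ofReal_mul (exp_pos a).le, ← mul_div_assoc,
    ← exp_add]
  ring_nf

lemma integral_Ioi_mul_exp_neg : ∫ t in Ioi (0 : ℝ), t * exp (-t) = 1 := by
  have h := Gamma_eq_integral two_pos
  norm_num [Gamma_two] at h
  simp_rw [mul_comm _ (exp _)]
  exact h.symm

lemma integrableOn_Ioi_mul_exp_neg : IntegrableOn (fun t : ℝ => t * exp (-t)) (Ioi 0) := by
  have h := GammaIntegral_convergent two_pos
  norm_num at h
  simpa only [mul_comm (exp _)] using h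

lemma lintegral_Ioo_two_mul {t : ℝ} (ht : 0 ≤ t) :
    ∫⁻ v in Ioo 0 t, ENNReal.ofReal (2 * v) = ENNReal.ofReal (t ^ 2) := by
  rw [← ofReal_integral_eq_lintegral_ofReal, ← integral_Ioc_eq_integral_Ioo,
    ← intervalIntegral.integral_of_le ht, intervalIntegral.integral_const_mul, integral_id]
  · ring_nf
  · exact (continuous_const.mul continuous_id).integrableOn_Icc.mono_set Ioo_subset_Icc_self
  · filter_upwards [ae_restrict_mem measurableSet_Ioo] with v hv
    exact mul_nonneg zero_le_two hv.1.le

lemma lintegral_mul_expIntE1 :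
    ∫⁻ v in Ioi 0, ENNReal.ofReal (2 * v * expIntE1 v) = 1 := by
  set g : ℝ → ℝ≥0∞ := fun t => ENNReal.ofReal (exp (-t) / t)
  let F : ℝ → ℝ → ℝ≥0∞ := fun v t => if v < t then ENNReal.ofReal (2 * v) * g t else 0
  have hF : Measurable (Function.uncurry F) :=
    Measurable.ite (measurableSet_lt measurable_fst measurable_snd) (by fun_prop) measurable_const
  have inner_t : ∀ v ∈ Ioi (0 : ℝ),
      ∫⁻ t in Ioi 0, F v t = ENNReal.ofReal (2 * v * expIntE1 v) := by
    intro v (hv : 0 < v)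
    calc ∫⁻ t in Ioi 0, F v t
        = ∫⁻ t in Ioi 0, (Ioi v).indicator (fun t => ENNReal.ofReal (2 * v) * g t) t := by
          simp only [F, indicator_apply, mem_Ioi]
      _ = ∫⁻ t in Ioi v, ENNReal.ofReal (2 * v) * g t := by
          rw [lintegral_indicator measurableSet_Ioi, Measure.restrict_restrict measurableSet_Ioi,
            inter_eq_left.mpr (Ioi_subset_Ioi hv.le)]
      _ = ENNReal.ofReal (2 * v * expIntE1 v) := by
          rw [lintegral_const_mul' _ _ ENNReal.ofReal_ne_top, ← ofReal_expIntE1 hv,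
            ← ENNReal.ofReal_mul (by positivity)]
  have inner_v : ∀ t ∈ Ioi (0 : ℝ), ∫⁻ v in Ioi 0, F v t = ENNReal.ofReal (t * exp (-t)) := by
    intro t (ht : 0 < t)
    calc ∫⁻ v in Ioi 0, F v t
        = ∫⁻ v in Ioi 0, (Iio t).indicator (fun v => ENNReal.ofReal (2 * v) * g t) v := by
          simp only [F, indicator_apply, mem_Iio]
      _ = ∫⁻ v in Ioo 0 t, ENNReal.ofReal (2 * v) * g t := by
          rw [lintegral_indicator measurableSet_Iio, Measure.restrict_restrict measurableSet_Iio,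
            Iio_inter_Ioi]
      _ = ENNReal.ofReal (t * exp (-t)) := by
          rw [lintegral_mul_const' _ _ ENNReal.ofReal_ne_top, lintegral_Ioo_two_mul ht.le,
            ← ENNReal.ofReal_mul (by positivity)]
          congr 1
          field_simp
  rw [← setLIntegral_congr_fun measurableSet_Ioi inner_t, lintegral_lintegral_swap hF.aemeasurable,
    setLIntegral_congr_fun measurableSet_Ioi inner_v,
    ← ofReal_integral_eq_lintegral_ofReal integrableOn_Ioi_mul_exp_neg, integral_Ioi_mul_exp_neg,
    ENNReal.ofReal_one]
  filter_upwards [ae_restrict_mem measurableSet_Ioi] with t (ht : 0 < t)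
  positivity

section Rayleigh

variable {σ : ℝ}

lemma lintegral_Ioi_exp_neg (c : ℝ) :
    ∫⁻ v in Ioi c, ENNReal.ofReal (exp (-v)) = ENNReal.ofReal (exp (-c)) := by
  rw [← ofReal_integral_eq_lintegral_ofReal (integrableOn_exp_neg_Ioi c)
    (ae_of_all _ fun _ => (exp_pos _).le), integral_exp_neg_Ioi]

lemma lintegral_Ioi_mul_comp_sq_div (hσ : 0 < σ) {c : ℝ} (hc : 0 ≤ c) (g : ℝ → ℝ≥0∞) :
    ∫⁻ x in Ioi c, ENNReal.ofReal (2 * x / σ) * g (x ^ 2 / σ) = ∫⁻ v in Ioi (c ^ 2 / σ), g v := by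
  have himg : (fun x : ℝ => x ^ 2 / σ) '' Ioi c = Ioi (c ^ 2 / σ) := by
    ext v
    refine ⟨fun ⟨x, (hx : c < x), hxv⟩ => hxv ▸ ?_, fun (hv : c ^ 2 / σ < v) => ?_⟩
    · exact div_lt_div_of_pos_right (pow_lt_pow_left₀ hx hc two_ne_zero) hσ
    · rw [div_lt_iff₀ hσ] at hv
      refine ⟨√(v * σ), lt_sqrt hc |>.mpr hv, ?_⟩
      change √(v * σ) ^ 2 / σ = v
      rw [sq_sqrt (by nlinarith [sq_nonneg c]), mul_div_cancel_right₀ _ hσ.ne']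
  have hinj : InjOn (fun x : ℝ => x ^ 2 / σ) (Ioi c) := fun x (hx : c < x) y (hy : c < y) h => by
    rwa [div_left_inj' hσ.ne', sq_eq_sq₀ (hc.trans hx.le) (hc.trans hy.le)] at h
  calc ∫⁻ x in Ioi c, ENNReal.ofReal (2 * x / σ) * g (x ^ 2 / σ)
      = ∫⁻ x in Ioi c, ENNReal.ofReal |2 * x / σ| * g (x ^ 2 / σ) :=
        setLIntegral_congr_fun measurableSet_Ioi fun x (hx : c < x) => by
          rw [abs_of_nonneg (by have := hc.trans hx.le; positivity)]
    _ = ∫⁻ v in (fun x : ℝ => x ^ 2 / σ) '' Ioi c, g v :=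
        (lintegral_image_eq_lintegral_abs_deriv_mul measurableSet_Ioi (fun x _ => by
          simpa using ((hasDerivAt_pow 2 x).div_const σ).hasDerivWithinAt) hinj g).symm
    _ = ∫⁻ v in Ioi (c ^ 2 / σ), g v := by rw [himg]

noncomputable def rayleighPDF (σ : ℝ) : ℝ → ℝ :=
  Set.indicator (Set.Ici 0) (fun t => (2 * t / σ) * Real.exp (-t ^ 2 / σ))

noncomputable def rayleighMeasure (σ : ℝ) : Measure ℝ :=
  volume.withDensity (fun t => ENNReal.ofReal (rayleighPDF σ t))

instance (σ : ℝ) : SFinite (rayleighMeasure σ) := by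
  rw [rayleighMeasure]; infer_instance

lemma rayleighPDF_of_nonneg {t : ℝ} (ht : 0 ≤ t) :
    rayleighPDF σ t = 2 * t / σ * exp (-t ^ 2 / σ) :=
  indicator_of_mem ht _

lemma lintegral_rayleighMeasure (g : ℝ → ℝ≥0∞) :
    ∫⁻ t, g t ∂rayleighMeasure σ = ∫⁻ t in Ioi 0, ENNReal.ofReal (rayleighPDF σ t) * g t := by
  have hpdf : (fun t => ENNReal.ofReal (rayleighPDF σ t))
      = (Ici 0).indicator fun t => ENNReal.ofReal (2 * t / σ * exp (-t ^ 2 / σ)) :=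
    (indicator_comp_of_zero ENNReal.ofReal_zero).symm
  rw [rayleighMeasure, lintegral_withDensity_eq_lintegral_mul_non_measurable _
    (by rw [hpdf]; exact Measurable.indicator (by fun_prop) measurableSet_Ici)
    (ae_of_all _ fun _ => ENNReal.ofReal_lt_top), hpdf]
  simp_rw [Pi.mul_apply, ← indicator_mul_left]
  rw [lintegral_indicator measurableSet_Ici, setLIntegral_congr Ioi_ae_eq_Ici.symm]
  refine setLIntegral_congr_fun measurableSet_Ioi fun t (ht : 0 < t) => ?_
  rw [rayleighPDF_of_nonneg ht.le]

lemma lintegral_rayleighMeasure_comp_sq_div (hσ : 0 < σ) (g : ℝ → ℝ≥0∞) :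
    ∫⁻ t, g (t ^ 2 / σ) ∂rayleighMeasure σ = ∫⁻ v in Ioi 0, ENNReal.ofReal (exp (-v)) * g v := by
  have hsub := lintegral_Ioi_mul_comp_sq_div hσ le_rfl fun v => ENNReal.ofReal (exp (-v)) * g v
  rw [zero_pow two_ne_zero, zero_div] at hsub
  rw [lintegral_rayleighMeasure, ← hsub]
  refine setLIntegral_congr_fun measurableSet_Ioi fun t (ht : 0 < t) => ?_
  rw [rayleighPDF_of_nonneg ht.le, ENNReal.ofReal_mul (by positivity), mul_assoc, neg_div]

lemma rayleighMeasure_Iio_zero : rayleighMeasure σ (Iio 0) = 0 := by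
  rw [rayleighMeasure, withDensity_apply _ measurableSet_Iio]
  refine setLIntegral_eq_zero measurableSet_Iio fun t (ht : t < 0) => ?_
  rw [rayleighPDF, indicator_of_notMem (show t ∉ Ici 0 from not_le.mpr ht), ENNReal.ofReal_zero]
  rfl

lemma ae_nonneg_rayleighMeasure : ∀ᵐ t ∂rayleighMeasure σ, 0 ≤ t :=
  ae_iff.mpr <| measure_mono_null (fun _ ht => not_le.mp ht) rayleighMeasure_Iio_zero

lemma rayleighMeasure_Ioi (hσ : 0 < σ) {c : ℝ} (hc : 0 ≤ c) :
    rayleighMeasure σ (Ioi c) = ENNReal.ofReal (exp (-(c ^ 2 / σ))) := by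
  rw [rayleighMeasure, withDensity_apply _ measurableSet_Ioi, ← lintegral_Ioi_exp_neg,
    ← lintegral_Ioi_mul_comp_sq_div hσ hc]
  refine setLIntegral_congr_fun measurableSet_Ioi fun t (ht : c < t) => ?_
  have := hc.trans_lt ht
  rw [rayleighPDF_of_nonneg this.le, ENNReal.ofReal_mul (by positivity), neg_div]

lemma lintegral_exp_neg_mul_rayleighMeasure (hσ : 0 < σ) {a : ℝ} (ha : -1 < a) :
    ∫⁻ t, ENNReal.ofReal (exp (-(a * (t ^ 2 / σ)))) ∂rayleighMeasure σ
      = ENNReal.ofReal (1 / (1 + a)) := by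
  have hneg : -(1 + a) < 0 := by linarith
  rw [lintegral_rayleighMeasure_comp_sq_div hσ fun v => ENNReal.ofReal (exp (-(a * v)))]
  simp_rw [← ENNReal.ofReal_mul (exp_pos _).le, ← exp_add,
    show ∀ v : ℝ, -v + -(a * v) = -(1 + a) * v from fun v => by ring]
  rw [← ofReal_integral_eq_lintegral_ofReal (integrableOn_exp_mul_Ioi hneg 0)
    (ae_of_all _ fun _ => (exp_pos _).le), integral_exp_mul_Ioi hneg, mul_zero, exp_zero]
  congr 1
  field_simp

lemma lintegral_sq_div_sq_add_rayleighMeasure (hσ : 0 < σ) {x : ℝ} (hx : 0 < x) :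
    ∫⁻ s, ENNReal.ofReal (x ^ 2 / (x ^ 2 + s ^ 2)) ∂rayleighMeasure σ
      = ENNReal.ofReal (x ^ 2 / σ * (exp (x ^ 2 / σ) * expIntE1 (x ^ 2 / σ))) := by
  have ha : 0 < x ^ 2 / σ := by positivity
  calc ∫⁻ s, ENNReal.ofReal (x ^ 2 / (x ^ 2 + s ^ 2)) ∂rayleighMeasure σ
      = ∫⁻ s, ENNReal.ofReal (x ^ 2 / σ / (s ^ 2 / σ + x ^ 2 / σ)) ∂rayleighMeasure σ := by
        congr! 3 with s
        field_simp
        ring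
    _ = ∫⁻ v in Ioi 0,
          ENNReal.ofReal (x ^ 2 / σ) * ENNReal.ofReal (exp (-v) / (v + x ^ 2 / σ)) := by
        rw [lintegral_rayleighMeasure_comp_sq_div hσ fun v =>
          ENNReal.ofReal (x ^ 2 / σ / (v + x ^ 2 / σ))]
        refine setLIntegral_congr_fun measurableSet_Ioi fun v (hv : 0 < v) => ?_
        rw [← ENNReal.ofReal_mul (exp_pos _).le, ← ENNReal.ofReal_mul ha.le]
        ring_nf
    _ = ENNReal.ofReal (x ^ 2 / σ * (exp (x ^ 2 / σ) * expIntE1 (x ^ 2 / σ))) := by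
        rw [lintegral_const_mul' _ _ ENNReal.ofReal_ne_top, lintegral_exp_neg_div_add ha,
          ← ENNReal.ofReal_mul ha.le]

lemma rayleighMeasure_prod_prod_mul_lt (hσ : 0 < σ) {x : ℝ} (hx : 0 < x) :
    ((rayleighMeasure σ).prod (rayleighMeasure σ)).prod (rayleighMeasure σ)
        {p : (ℝ × ℝ) × ℝ | p.1.1 * p.1.2 < x * p.2}
      = ENNReal.ofReal (x ^ 2 / σ * (exp (x ^ 2 / σ) * expIntE1 (x ^ 2 / σ))) := by
  set S := {p : (ℝ × ℝ) × ℝ | p.1.1 * p.1.2 < x * p.2}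
  have hS : MeasurableSet S := measurableSet_lt (by fun_prop) (by fun_prop)
  rw [Measure.prod_apply hS, lintegral_prod _ (measurable_measure_prodMk_left hS).aemeasurable,
    ← lintegral_sq_div_sq_add_rayleighMeasure hσ hx]
  refine lintegral_congr_ae ?_
  filter_upwards [ae_nonneg_rayleighMeasure] with s hs
  calc ∫⁻ t, rayleighMeasure σ (Prod.mk (s, t) ⁻¹' S) ∂rayleighMeasure σ
      = ∫⁻ t, ENNReal.ofReal (exp (-((s / x) ^ 2 * (t ^ 2 / σ)))) ∂rayleighMeasure σ := by
        refine lintegral_congr_ae ?_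
        filter_upwards [ae_nonneg_rayleighMeasure] with t ht
        have hslice : Prod.mk (s, t) ⁻¹' S = Ioi (s * t / x) := by
          ext u
          simp [S, div_lt_iff₀ hx, mul_comm u]
        rw [hslice, rayleighMeasure_Ioi hσ (by positivity)]
        ring_nf
    _ = ENNReal.ofReal (1 / (1 + (s / x) ^ 2)) :=
        lintegral_exp_neg_mul_rayleighMeasure hσ (by linarith [sq_nonneg (s / x)])
    _ = ENNReal.ofReal (x ^ 2 / (x ^ 2 + s ^ 2)) := by
        congr 1
        field_simp

end Rayleigh

lemma mul_expIntE1_sq_div_nonneg {σ x : ℝ} (hσ : 0 < σ) (hx : 0 ≤ x) :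
    0 ≤ 4 * x ^ 3 / σ ^ 2 * expIntE1 (x ^ 2 / σ) :=
  mul_nonneg (by positivity) (expIntE1_nonneg (by positivity))

lemma integral_Ioi_mul_expIntE1_sq_div {σ : ℝ} (hσ : 0 < σ) :
    ∫ x in Ioi 0, 4 * x ^ 3 / σ ^ 2 * expIntE1 (x ^ 2 / σ) = 1 := by
  have hsub :=
    lintegral_Ioi_mul_comp_sq_div hσ le_rfl fun v => ENNReal.ofReal (2 * v * expIntE1 v)
  rw [zero_pow two_ne_zero, zero_div, lintegral_mul_expIntE1] at hsub
  have hsplit : ∀ x ∈ Ioi (0 : ℝ), ENNReal.ofReal (4 * x ^ 3 / σ ^ 2 * expIntE1 (x ^ 2 / σ))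
      = ENNReal.ofReal (2 * x / σ) * ENNReal.ofReal (2 * (x ^ 2 / σ) * expIntE1 (x ^ 2 / σ)) :=
    fun x (hx : 0 < x) => by
      rw [← ENNReal.ofReal_mul (by positivity)]
      ring_nf
  rw [integral_eq_lintegral_of_nonneg_ae
    (ae_restrict_of_forall_mem measurableSet_Ioi fun x (hx : 0 < x) =>
      mul_expIntE1_sq_div_nonneg hσ hx.le) (by fun_prop),
    setLIntegral_congr_fun measurableSet_Ioi hsplit, hsub, ENNReal.toReal_one]

lemma map_prodMk_prodMk_eq_prod_of_iIndepFun {Ω β : Type*} [MeasurableSpace Ω]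
    [MeasurableSpace β] {P : Measure Ω} [IsFiniteMeasure P] {X Y Z : Ω → β}
    (hX : Measurable X) (hY : Measurable Y) (hZ : Measurable Z) (h : iIndepFun ![X, Y, Z] P) :
    P.map (fun ω => ((Y ω, Z ω), X ω)) = ((P.map Y).prod (P.map Z)).prod (P.map X) := by
  have hmeas : ∀ i, Measurable (![X, Y, Z] i) := by
    intro i; fin_cases i <;> assumption
  have hYZ : IndepFun Y Z P := by simpa using h.indepFun (show (1 : Fin 3) ≠ 2 by decide)
  have hYZX : IndepFun (fun ω => (Y ω, Z ω)) X P := by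
    simpa using h.indepFun_prodMk hmeas 1 2 0 (by decide) (by decide)
  rw [hYZX.map_prod_eq_prod_map_map (hY.prodMk hZ).aemeasurable hX.aemeasurable,
    hYZ.map_prod_eq_prod_map_map hY.aemeasurable hZ.aemeasurable]

/-- The factor density of the maximum of two products of two i.i.d.
Rayleigh(σ) variables: for `x > 0`,
`2 f(x) P(X₃ X₄ < x X₂) = (4x³/σ²) E₁(x²/σ)`, and this function is a
probability density on `(0,∞)`. -/
theorem rayleigh_factor_distribution
    {Ω : Type*} [MeasurableSpace Ω] (P : Measure Ω) [IsProbabilityMeasure P]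
    (σ : ℝ) (hσ : 0 < σ)
    (X₂ X₃ X₄ : Ω → ℝ)
    (hX₂ : Measurable X₂) (hX₃ : Measurable X₃) (hX₄ : Measurable X₄)
    (f : ℝ → ℝ)
    (hf : f = Set.indicator (Set.Ici 0)
      (fun t => (2 * t / σ) * Real.exp (-t ^ 2 / σ)))
    (hlaw₂ : P.map X₂ = MeasureTheory.volume.withDensity
      (fun t => ENNReal.ofReal (f t)))
    (hlaw₃ : P.map X₃ = MeasureTheory.volume.withDensity
      (fun t => ENNReal.ofReal (f t)))
    (hlaw₄ : P.map X₄ = MeasureTheory.volume.withDensity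
      (fun t => ENNReal.ofReal (f t)))
    (hindep : iIndepFun ![X₂, X₃, X₄] P) :
    (∀ x : ℝ, 0 < x →
      2 * f x * (P {ω | X₃ ω * X₄ ω < x * X₂ ω}).toReal
        = (4 * x ^ 3 / σ ^ 2) * expIntE1 (x ^ 2 / σ))
    ∧ (∀ x ∈ Set.Ioi (0:ℝ), 0 ≤ (4 * x ^ 3 / σ ^ 2) * expIntE1 (x ^ 2 / σ))
    ∧ ∫ x in Set.Ioi (0:ℝ), (4 * x ^ 3 / σ ^ 2) * expIntE1 (x ^ 2 / σ) = 1 := by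
  change f = rayleighPDF σ at hf
  subst hf
  change P.map X₂ = rayleighMeasure σ at hlaw₂
  change P.map X₃ = rayleighMeasure σ at hlaw₃
  change P.map X₄ = rayleighMeasure σ at hlaw₄
  refine ⟨fun x hx => ?_, fun x (hx : 0 < x) => mul_expIntE1_sq_div_nonneg hσ hx.le,
    integral_Ioi_mul_expIntE1_sq_div hσ⟩
  have hjoint : P.map (fun ω => ((X₃ ω, X₄ ω), X₂ ω))
      = ((rayleighMeasure σ).prod (rayleighMeasure σ)).prod (rayleighMeasure σ) := by
    rw [map_prodMk_prodMk_eq_prod_of_iIndepFun hX₂ hX₃ hX₄ hindep, hlaw₂, hlaw₃, hlaw₄]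
  have hprob : P {ω | X₃ ω * X₄ ω < x * X₂ ω}
      = ENNReal.ofReal (x ^ 2 / σ * (exp (x ^ 2 / σ) * expIntE1 (x ^ 2 / σ))) := by
    rw [← rayleighMeasure_prod_prod_mul_lt hσ hx, ← hjoint,
      Measure.map_apply (by fun_prop) (measurableSet_lt (by fun_prop) (by fun_prop))]
    rfl
  have hE := expIntE1_nonneg (a := x ^ 2 / σ) (by positivity)
  rw [hprob, ENNReal.toReal_ofReal (by positivity), rayleighPDF_of_nonneg hx.le, neg_div, exp_neg]
  field_simp
  ring
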